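/- arXiv:0705.0186 — 4 statements merged into one kernel-verified Lean document; each statement's English description precedes it below -/
import Mathlib

section
/- Let C₁ be a ground state at field H₁ and C₂ a ground state at field H₂ with H₁ < H₂ and M(C₁) < M(C₂), and let H* = (E₀(C₂) - E₀(C₁)) / (M(C₂) - M(C₁)) be the crossing field. Assume there is no spin configuration C with E(C, H*) < E(C₁, H*). Then C₁ is a ground state at every field H with H₁ ≤ H ≤ H*, and C₂ is a ground state at every field H with H* ≤ H ≤ H₂. -/
open Finset

section RFIM

variable {V : Type*} [Fintype V] [Nonempty V] [DecidableEq V]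
variable (G : SimpleGraph V) [DecidableRel G.Adj]
variable (J : ℝ) (h : V → ℝ)

/-- A spin configuration: every spin is `-1` or `+1`. -/
def IsSpin (σ : V → ℤ) : Prop := ∀ i, σ i = -1 ∨ σ i = 1

/-- The product of the two spins at the endpoints of an (unordered) edge. -/
noncomputable def pairProd (σ : V → ℤ) : Sym2 V → ℝ :=
  Sym2.lift ⟨fun i j => (σ i : ℝ) * (σ j : ℝ), fun i j => by ring⟩

/-- Energy of configuration `σ` at external field `H`. -/
noncomputable def E (σ : V → ℤ) (H : ℝ) : ℝ :=
  -J * (∑ e ∈ G.edgeFinset, pairProd σ e) - ∑ i, (H + h i) * (σ i : ℝ)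

/-- Magnetization. -/
noncomputable def M (σ : V → ℤ) : ℝ := ∑ i, (σ i : ℝ)

/-- Energy at zero field. -/
noncomputable def E₀ (σ : V → ℤ) : ℝ := E G J h σ 0

/-- `σ` is a ground state at field `H`. -/
def IsGroundState (H : ℝ) (σ : V → ℤ) : Prop :=
  IsSpin σ ∧ ∀ τ : V → ℤ, IsSpin τ → E G J h σ H ≤ E G J h τ H

omit [Nonempty V] [DecidableEq V] in
theorem E_eq_E₀_sub_mul_M (σ : V → ℤ) (H : ℝ) :
    E G J h σ H = E₀ G J h σ - H * M σ := by
  simp only [E, E₀, M, add_mul, sum_add_distrib, ← mul_sum, zero_add]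
  ring

omit [Nonempty V] [DecidableEq V] in
theorem E_eq_E_at_crossing {σ τ : V → ℤ} (hM : M σ ≠ M τ) :
    E G J h σ ((E₀ G J h τ - E₀ G J h σ) / (M τ - M σ)) =
      E G J h τ ((E₀ G J h τ - E₀ G J h σ) / (M τ - M σ)) := by
  have hM' : M τ - M σ ≠ 0 := sub_ne_zero.2 hM.symm
  rw [E_eq_E₀_sub_mul_M, E_eq_E₀_sub_mul_M]
  field_simp
  ring

omit [Nonempty V] [DecidableEq V] in
/-- Each energy difference `E σ H - E τ H` is affine in `H`, so it is `≤ 0` between two fields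
where it is `≤ 0`. -/
theorem ordConnected_setOf_isGroundState (σ : V → ℤ) :
    Set.OrdConnected {H | IsGroundState G J h H σ} := by
  refine ⟨fun H₁ hσ₁ H₂ hσ₂ H ⟨hH₁, hH₂⟩ => ⟨hσ₁.1, fun τ hτ => ?_⟩⟩
  have e₁ := hσ₁.2 τ hτ
  have e₂ := hσ₂.2 τ hτ
  simp only [E_eq_E₀_sub_mul_M] at e₁ e₂ ⊢
  rcases le_total (M σ) (M τ) with hm | hm
  · nlinarith [mul_nonneg (sub_nonneg.2 hH₂) (sub_nonneg.2 hm)]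
  · nlinarith [mul_nonneg (sub_nonneg.2 hH₁) (sub_nonneg.2 hm)]

theorem ground_state_on_intervals
    (H₁ H₂ : ℝ) (C₁ C₂ : V → ℤ)
    (h₁ : IsGroundState G J h H₁ C₁) (h₂ : IsGroundState G J h H₂ C₂)
    (hM : M C₁ < M C₂)
    (hstar : ¬ ∃ C : V → ℤ, IsSpin C ∧
      E G J h C ((E₀ G J h C₂ - E₀ G J h C₁) / (M C₂ - M C₁)) <
        E G J h C₁ ((E₀ G J h C₂ - E₀ G J h C₁) / (M C₂ - M C₁))) :
    (∀ H : ℝ, H₁ ≤ H → H ≤ (E₀ G J h C₂ - E₀ G J h C₁) / (M C₂ - M C₁) →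
        IsGroundState G J h H C₁) ∧
    (∀ H : ℝ, (E₀ G J h C₂ - E₀ G J h C₁) / (M C₂ - M C₁) ≤ H → H ≤ H₂ →
        IsGroundState G J h H C₂) := by
  set Hs := (E₀ G J h C₂ - E₀ G J h C₁) / (M C₂ - M C₁)
  simp only [not_exists, not_and, not_lt] at hstar
  have hC₁ : IsGroundState G J h Hs C₁ := ⟨h₁.1, hstar⟩
  have hC₂ : IsGroundState G J h Hs C₂ :=
    ⟨h₂.1, fun τ hτ => E_eq_E_at_crossing G J h hM.ne ▸ hstar τ hτ⟩
  exact ⟨fun H hH₁ hHs => (ordConnected_setOf_isGroundState G J h C₁).out h₁ hC₁ ⟨hH₁, hHs⟩,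
    fun H hHs hH₂ => (ordConnected_setOf_isGroundState G J h C₂).out hC₂ h₂ ⟨hHs, hH₂⟩⟩

end RFIM
end

section
/- Let σ be a spin configuration and F ⊆ V a set of sites, and let σ^F denote the configuration obtained from σ by flipping all spins in F (σ^F i = -σ i for i ∈ F, σ^F i = σ i otherwise). Then for every field H, E(σ^F, H) - E(σ, H) = (sum over i ∈ F of 2 * σ i * (J * (sum of σ j over all neighbors j of i in G) + h i + H)) - 4 * J * (sum over unordered edges {i,j} of G with both endpoints in F of σ i * σ j). -/
/-! Write `σ^F i = (1 - 2·[i ∈ F]) σ i`. The field term then changes by `-2 (H + h i) σ i` at each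
`i ∈ F`, and an edge `{i, j}` changes by `-2 σ i σ j ([i ∈ F] + [j ∈ F]) + 4 σ i σ j [i ∈ F] [j ∈ F]`.
Splitting each edge into its two darts, the first part sums to `-2 ∑_{i ∈ F} σ i ∑_{j ~ i} σ j`,
the local fields at the flipped sites; the second is the correction for edges inside `F`. -/

open Finset

namespace Sym2

variable {α M : Type*} [AddCommMonoid M]

def liftSum (f : α → α → M) : Sym2 α → M :=
  Sym2.lift ⟨fun a b => f a b + f b a, fun _ _ => add_comm _ _⟩

@[simp]
theorem liftSum_mk (f : α → α → M) (a b : α) : liftSum f s(a, b) = f a b + f b a :=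
  rfl

end Sym2

namespace SimpleGraph

variable {V M : Type*} [AddCommMonoid M] (G : SimpleGraph V) [Fintype V] [DecidableRel G.Adj]

theorem sum_darts_eq_sum_sum_neighborFinset (f : V → V → M) :
    ∑ d : G.Dart, f d.fst d.snd = ∑ v, ∑ w ∈ G.neighborFinset v, f v w := by
  classical
  let dartEquiv : G.Dart ≃ Σ v, G.neighborSet v :=
    { toFun := fun d => ⟨d.fst, d.snd, d.adj⟩
      invFun := fun s => ⟨(s.1, s.2), s.2.2⟩ }
  rw [← dartEquiv.symm.sum_comp, Fintype.sum_sigma]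
  refine sum_congr rfl fun v _ => ?_
  rw [neighborFinset_def, ← sum_set_coe]
  rfl

theorem sum_darts_eq_sum_edgeFinset [DecidableEq V] (f : V → V → M) :
    ∑ d : G.Dart, f d.fst d.snd = ∑ e ∈ G.edgeFinset, Sym2.liftSum f e := by
  rw [← sum_fiberwise_of_maps_to (g := Dart.edge) (t := G.edgeFinset) (by simp)]
  refine sum_congr rfl fun e he => ?_
  induction e using Sym2.ind with | h v w =>
  let d : G.Dart := ⟨(v, w), mem_edgeFinset.1 he⟩
  rw [show ({d' : G.Dart | d'.edge = s(v, w)} : Finset _) = {d, d.symm} from d.edge_fiber,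
    sum_pair d.symm_ne.symm]
  rfl

theorem sum_sum_neighborFinset_eq_sum_edgeFinset [DecidableEq V] (f : V → V → M) :
    ∑ v, ∑ w ∈ G.neighborFinset v, f v w = ∑ e ∈ G.edgeFinset, Sym2.liftSum f e := by
  rw [← sum_darts_eq_sum_sum_neighborFinset, sum_darts_eq_sum_edgeFinset]

end SimpleGraph

section SpinFlip

variable {V : Type*} [DecidableEq V] (F : Finset V) (σ : V → ℤ)

def flipSpins : V → ℤ := fun i => if i ∈ F then -σ i else σ i

theorem sum_mul_flipSpins [Fintype V] (c : V → ℝ) :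
    ∑ i, c i * flipSpins F σ i = ∑ i, c i * σ i - 2 * ∑ i ∈ F, c i * σ i := by
  have hflip : ∀ i, c i * flipSpins F σ i = c i * σ i - 2 * if i ∈ F then c i * σ i else 0 := by
    intro i
    unfold flipSpins
    split_ifs <;> push_cast <;> ring
  simp only [hflip, sum_sub_distrib, ← mul_sum, sum_ite_mem, univ_inter]

theorem pairProd_flipSpins [Fintype V] (e : Sym2 V) :
    pairProd (flipSpins F σ) e = pairProd σ e
      - 2 * Sym2.liftSum (fun v w => if v ∈ F then (σ v * σ w : ℝ) else 0) e
      + 4 * if ∀ i ∈ e, i ∈ F then pairProd σ e else 0 := by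
  induction e using Sym2.ind with | h v w =>
  by_cases hv : v ∈ F <;> by_cases hw : w ∈ F <;>
    simp only [pairProd, flipSpins, Sym2.lift_mk, Sym2.liftSum_mk, Sym2.mem_iff, forall_eq_or_imp,
      forall_eq, hv, hw, and_self, and_true, and_false, ↓reduceIte, Int.cast_neg] <;> ring

theorem sum_pairProd_flipSpins [Fintype V] (G : SimpleGraph V) [DecidableRel G.Adj] :
    ∑ e ∈ G.edgeFinset, pairProd (flipSpins F σ) e = ∑ e ∈ G.edgeFinset, pairProd σ e
      - 2 * ∑ i ∈ F, (σ i : ℝ) * ∑ j ∈ G.neighborFinset i, (σ j : ℝ)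
      + 4 * ∑ e ∈ G.edgeFinset.filter (fun e => ∀ i ∈ e, i ∈ F), pairProd σ e := by
  have hneighbors : ∑ e ∈ G.edgeFinset,
      Sym2.liftSum (fun v w => if v ∈ F then (σ v * σ w : ℝ) else 0) e
        = ∑ i ∈ F, (σ i : ℝ) * ∑ j ∈ G.neighborFinset i, (σ j : ℝ) := by
    simp only [← G.sum_sum_neighborFinset_eq_sum_edgeFinset, sum_ite_irrel, sum_const_zero,
      sum_ite_mem, univ_inter, mul_sum]
  rw [sum_congr rfl fun e _ => pairProd_flipSpins F σ e, sum_add_distrib, sum_sub_distrib,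
    ← mul_sum, ← mul_sum, hneighbors, sum_filter]

end SpinFlip

section RFIM

variable {V : Type*} [Fintype V] [Nonempty V] [DecidableEq V]
variable (G : SimpleGraph V) [DecidableRel G.Adj]
variable (J : ℝ) (h : V → ℝ)

theorem multi_flip_energy_change
    (σ : V → ℤ) (F : Finset V) (H : ℝ) :
    E G J h (fun i => if i ∈ F then -(σ i) else σ i) H - E G J h σ H =
      (∑ i ∈ F, 2 * (σ i : ℝ) *
          (J * (∑ j ∈ G.neighborFinset i, (σ j : ℝ)) + h i + H)) -
        4 * J * (∑ e ∈ G.edgeFinset.filter (fun e => ∀ i ∈ e, i ∈ F),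
          pairProd σ e) := by
  change E G J h (flipSpins F σ) H - _ = _
  have hlocal : ∀ i, 2 * (σ i : ℝ) * (J * (∑ j ∈ G.neighborFinset i, (σ j : ℝ)) + h i + H)
      = 2 * J * ((σ i : ℝ) * ∑ j ∈ G.neighborFinset i, (σ j : ℝ)) + 2 * ((H + h i) * σ i) :=
    fun i => by ring
  simp only [E, sum_mul_flipSpins, sum_pairProd_flipSpins, hlocal, sum_add_distrib, ← mul_sum]
  ring

end RFIM
end

section
/- For any two spin configurations σ and τ and any field H, E(σ ∨ τ, H) + E(σ ∧ τ, H) ≤ E(σ, H) + E(τ, H), where (σ ∨ τ) i = max(σ i, τ i) and (σ ∧ τ) i = min(σ i, τ i) (submodularity of the random-field Ising energy for ferromagnetic coupling J > 0). -/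
/-! The interaction term is where the sign of `J` matters: for each edge, the products of
the endpoint spins satisfy `σᵢσⱼ + τᵢτⱼ ≤ (σ ⊔ τ)ᵢ(σ ⊔ τ)ⱼ + (σ ⊓ τ)ᵢ(σ ⊓ τ)ⱼ` (pairing the
larger values together maximises the sum, by rearrangement), and `-J` with `J > 0` turns this
into the required inequality. The field term is linear in the spins and
`max a b + min a b = a + b`, so it contributes equally to both sides. -/

open Finset

theorem mul_add_mul_le_max_mul_max_add_min_mul_min {α : Type*} [CommRing α] [LinearOrder α]
    [IsStrictOrderedRing α] (a b c d : α) :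
    a * c + b * d ≤ max a b * max c d + min a b * min c d := by
  rcases le_total a b with hab | hab <;> rcases le_total c d with hcd | hcd <;>
    simp only [max_eq_left, max_eq_right, min_eq_left, min_eq_right, hab, hcd] <;>
    nlinarith [mul_nonneg (sub_nonneg.2 hab) (sub_nonneg.2 hcd)]

section

variable {V : Type*}

theorem pairProd_add_pairProd_le (σ τ : V → ℤ) (e : Sym2 V) :
    pairProd σ e + pairProd τ e ≤ pairProd (σ ⊔ τ) e + pairProd (σ ⊓ τ) e := by
  induction e using Sym2.ind with
  | _ i j =>
    simp only [pairProd, Sym2.lift_mk, Pi.sup_apply, Pi.inf_apply, Int.cast_max, Int.cast_min]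
    exact mul_add_mul_le_max_mul_max_add_min_mul_min _ _ _ _

theorem sum_mul_sup_add_sum_mul_inf [Fintype V] (w : V → ℝ) (σ τ : V → ℤ) :
    ∑ i, w i * ((σ ⊔ τ) i : ℝ) + ∑ i, w i * ((σ ⊓ τ) i : ℝ) =
      ∑ i, w i * (σ i : ℝ) + ∑ i, w i * (τ i : ℝ) := by
  simp only [← sum_add_distrib, ← mul_add]
  congr! 2 with i
  exact_mod_cast max_add_min (σ i) (τ i)

end

section RFIM

variable {V : Type*} [Fintype V] [Nonempty V] [DecidableEq V]
variable (G : SimpleGraph V) [DecidableRel G.Adj]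
variable (J : ℝ) (h : V → ℝ)

theorem energy_submodular
    (hJ : 0 < J) (σ τ : V → ℤ) (H : ℝ) :
    E G J h (fun i => max (σ i) (τ i)) H + E G J h (fun i => min (σ i) (τ i)) H ≤
      E G J h σ H + E G J h τ H := by
  have bonds : ∑ e ∈ G.edgeFinset, (pairProd σ e + pairProd τ e) ≤
      ∑ e ∈ G.edgeFinset, (pairProd (σ ⊔ τ) e + pairProd (σ ⊓ τ) e) :=
    sum_le_sum fun e _ ↦ pairProd_add_pairProd_le σ τ e
  have fields := sum_mul_sup_add_sum_mul_inf (fun i ↦ H + h i) σ τ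
  rw [sum_add_distrib, sum_add_distrib] at bonds
  change E G J h (σ ⊔ τ) H + E G J h (σ ⊓ τ) H ≤ _
  unfold E
  linarith [mul_le_mul_of_nonneg_left bonds hJ.le]

end RFIM
end

section
/- Single-avalanche property: let C₁ ≠ C₂ be two spin configurations that are both ground states at a field H*, and suppose the ground state is otherwise non-degenerate at H*, i.e., every spin configuration C with C ≠ C₁ and C ≠ C₂ satisfies E(C, H*) > E(C₁, H*). Then the set D = {i ∈ V | C₁ i ≠ C₂ i} of sites on which the two ground states differ induces a connected subgraph of G; in particular, D cannot be partitioned into two nonempty sets A₁ and A₂ with no edge of G between them (two consecutive ground states are connected by a single avalanche). -/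
open Finset

/-!
Let `A` be a set of sites meeting `D = {C₁ ≠ C₂}` with no edge from `A` into `D \ A`. Exchanging
`C₁` and `C₂` on `A` yields two spin configurations whose energies add up to
`E(C₁) + E(C₂)`: bonds inside or outside `A` are merely swapped, and a bond leaving `A` ends at a
site where `C₁` and `C₂` agree. Both are therefore ground states. By non-degeneracy, the one that
equals `C₂` on `A` (hence differs from `C₁`) must be `C₂` itself, so `A ⊇ D`.
-/

namespace SimpleGraph

theorem induce_connected_of_forall_closed {V : Type*} {G : SimpleGraph V} {D : Set V}
    (hD : D.Nonempty)
    (h : ∀ A : Set V, (A ∩ D).Nonempty →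
      (∀ i j, G.Adj i j → i ∈ A → j ∉ A → j ∉ D) → D ⊆ A) :
    (G.induce D).Connected := by
  obtain ⟨i₀, hi₀⟩ := hD
  let A : Set V := {j | ∃ hj : j ∈ D, (G.induce D).Reachable ⟨i₀, hi₀⟩ ⟨j, hj⟩}
  have hDA : D ⊆ A := by
    refine h A ⟨i₀, ⟨hi₀, .refl _⟩, hi₀⟩ fun i j hij ⟨hi, hreach⟩ hjA hj => hjA ?_
    exact ⟨hj, hreach.trans (Adj.reachable (G := G.induce D) hij)⟩
  rw [connected_iff_exists_forall_reachable]
  exact ⟨⟨i₀, hi₀⟩, fun ⟨j, hj⟩ => (hDA hj).2⟩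

end SimpleGraph

section Exchange

variable {V : Type*} {σ τ : V → ℤ} {A : Set V} [DecidablePred (· ∈ A)]

theorem IsSpin.piecewise (hσ : IsSpin σ) (hτ : IsSpin τ) : IsSpin (A.piecewise σ τ) := by
  intro i
  by_cases hi : i ∈ A
  · simpa only [Set.piecewise_eq_of_mem _ _ _ hi] using hσ i
  · simpa only [Set.piecewise_eq_of_notMem _ _ _ hi] using hτ i

variable {G : SimpleGraph V}

theorem pairProd_piecewise_add (hA : ∀ i j, G.Adj i j → i ∈ A → j ∉ A → σ j = τ j)
    {e : Sym2 V} (he : e ∈ G.edgeSet) :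
    pairProd (A.piecewise τ σ) e + pairProd (A.piecewise σ τ) e =
      pairProd σ e + pairProd τ e := by
  induction e using Sym2.ind with
  | _ i j =>
    simp only [pairProd, Sym2.lift_mk]
    by_cases hi : i ∈ A <;> by_cases hj : j ∈ A
    · simp only [Set.piecewise_eq_of_mem _ _ _ hi, Set.piecewise_eq_of_mem _ _ _ hj]; ring
    · simp only [Set.piecewise_eq_of_mem _ _ _ hi, Set.piecewise_eq_of_notMem _ _ _ hj,
        hA i j he hi hj]; ring
    · simp only [Set.piecewise_eq_of_notMem _ _ _ hi, Set.piecewise_eq_of_mem _ _ _ hj,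
        hA j i (G.adj_symm he) hj hi]; ring
    · simp only [Set.piecewise_eq_of_notMem _ _ _ hi, Set.piecewise_eq_of_notMem _ _ _ hj]

variable [Fintype V] [DecidableRel G.Adj] {J : ℝ} {h : V → ℝ} {H : ℝ}

theorem E_piecewise_add (hA : ∀ i j, G.Adj i j → i ∈ A → j ∉ A → σ j = τ j) :
    E G J h (A.piecewise τ σ) H + E G J h (A.piecewise σ τ) H = E G J h σ H + E G J h τ H := by
  have hedges : ∑ e ∈ G.edgeFinset, (pairProd (A.piecewise τ σ) e + pairProd (A.piecewise σ τ) e)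
      = ∑ e ∈ G.edgeFinset, (pairProd σ e + pairProd τ e) :=
    sum_congr rfl fun e he => pairProd_piecewise_add hA (G.mem_edgeFinset.mp he)
  have hsites : ∑ i, ((H + h i) * (A.piecewise τ σ i : ℝ) + (H + h i) * (A.piecewise σ τ i : ℝ))
      = ∑ i, ((H + h i) * (σ i : ℝ) + (H + h i) * (τ i : ℝ)) := by
    refine sum_congr rfl fun i _ => ?_
    by_cases hi : i ∈ A
    · simp only [Set.piecewise_eq_of_mem _ _ _ hi]; ring
    · simp only [Set.piecewise_eq_of_notMem _ _ _ hi]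
  simp only [E, sum_add_distrib] at hedges hsites ⊢
  linear_combination (-J) * hedges - hsites

theorem IsGroundState.piecewise (hσ : IsGroundState G J h H σ) (hτ : IsGroundState G J h H τ)
    (hA : ∀ i j, G.Adj i j → i ∈ A → j ∉ A → σ j = τ j) :
    IsGroundState G J h H (A.piecewise τ σ) := by
  refine ⟨hτ.1.piecewise hσ.1, fun ρ hρ => ?_⟩
  linarith [E_piecewise_add (J := J) (h := h) (H := H) hA, hσ.2 _ (hσ.1.piecewise hτ.1 (A := A)),
    hτ.2 ρ hρ]

end Exchange

section RFIM

variable {V : Type*} [Fintype V] [Nonempty V] [DecidableEq V]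
variable (G : SimpleGraph V) [DecidableRel G.Adj]
variable (J : ℝ) (h : V → ℝ)

theorem single_avalanche
    (Hstar : ℝ) (C₁ C₂ : V → ℤ)
    (h₁ : IsGroundState G J h Hstar C₁) (h₂ : IsGroundState G J h Hstar C₂)
    (hne : C₁ ≠ C₂)
    (hnd : ∀ C : V → ℤ, IsSpin C → C ≠ C₁ → C ≠ C₂ →
      E G J h C₁ Hstar < E G J h C Hstar) :
    (G.induce {i : V | C₁ i ≠ C₂ i}).Connected := by
  classical
  refine SimpleGraph.induce_connected_of_forall_closed (Function.ne_iff.mp hne)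
    fun A ⟨i₀, hi₀A, hi₀⟩ hA => ?_
  have hground : IsGroundState G J h Hstar (A.piecewise C₂ C₁) :=
    h₁.piecewise h₂ fun i j hij hi hj => not_not.mp (hA i j hij hi hj)
  have hne₁ : A.piecewise C₂ C₁ ≠ C₁ := fun heq =>
    hi₀ (by rw [← congrFun heq i₀, Set.piecewise_eq_of_mem _ _ _ hi₀A])
  have heq₂ : A.piecewise C₂ C₁ = C₂ := by
    by_contra hne₂
    exact (hnd _ hground.1 hne₁ hne₂).not_ge (hground.2 C₁ h₁.1)
  intro j hj
  by_contra hjA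
  exact hj (by rw [← congrFun heq₂ j, Set.piecewise_eq_of_notMem _ _ _ hjA])

end RFIM
end
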